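/- arXiv:0804.2031 — 2 statements merged into one kernel-verified Lean document; each statement's English description precedes it below -/
import Mathlib

section
/- Let R be a commutative ring, let D_x, D_y : R → R be two commuting derivations extended entrywise to matrices, let m ≥ 0, and let A₀,…,A_m and B₀,…,B_m be n×n matrices over R. Then the equations D_y A_k - D_x B_k + Σ_{i+j=k} (A_i·B_j - B_j·A_i) = 0 hold for all k = 0,…,m if and only if the (m+1)n×(m+1)n block lower-triangular Toeplitz matrices A⁽ᵐ⁾ and B⁽ᵐ⁾, whose (i,j) block (0 ≤ j ≤ i ≤ m) equals A_{i-j} resp. B_{i-j} and whose blocks above the diagonal are zero, constitute a zero-curvature representation: D_y A⁽ᵐ⁾ - D_x B⁽ᵐ⁾ + A⁽ᵐ⁾·B⁽ᵐ⁾ - B⁽ᵐ⁾·A⁽ᵐ⁾ = 0. -/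
/-- A derivation of a commutative ring: an additive map satisfying the Leibniz rule. -/
def IsDeriv {R : Type*} [CommRing R] (D : R → R) : Prop :=
  (∀ a b, D (a + b) = D a + D b) ∧ (∀ a b, D (a * b) = D a * b + a * D b)

/-- The `(m+1)`-fold block lower-triangular Toeplitz matrix built from the matrices
`A 0, …, A m`: its `(i,j)` block is `A (i-j)` for `j ≤ i` and `0` above the diagonal. -/
def toeplitz {R : Type*} [CommRing R] {n : ℕ} (m : ℕ) (A : ℕ → Matrix (Fin n) (Fin n) R) :
    Matrix (Fin (m + 1) × Fin n) (Fin (m + 1) × Fin n) R :=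
  Matrix.of fun p q => if (q.1 : ℕ) ≤ (p.1 : ℕ) then A ((p.1 : ℕ) - (q.1 : ℕ)) p.2 q.2 else 0

/-!
Block lower-triangular Toeplitz matrices multiply like truncated power series: the Toeplitz matrix
of `X` times that of `Y` is the Toeplitz matrix of the Cauchy product `k ↦ ∑_{i+j=k} X i * Y j`,
and taking Toeplitz matrices commutes with sums, differences and entrywise maps fixing `0`. Hence
the zero-curvature expression of `(A⁽ᵐ⁾, B⁽ᵐ⁾)` is itself the Toeplitz matrix whose blocks are the
left-hand sides of the truncated equations, and it vanishes iff its blocks `0, …, m` do.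
-/

open Finset

lemma IsDeriv.map_zero {R : Type*} [CommRing R] {D : R → R} (hD : IsDeriv D) : D 0 = 0 := by
  simpa using hD.1 0 0

lemma Fin.sum_ite_le_le_eq_sum_antidiagonal {M : Type*} [AddCommMonoid M] {m i : ℕ} (hi : i ≤ m)
    (j : ℕ) (f : ℕ → ℕ → M) :
    ∑ r : Fin (m + 1), (if j ≤ (r : ℕ) ∧ (r : ℕ) ≤ i then f (i - r) (r - j) else 0) =
      if j ≤ i then ∑ p ∈ antidiagonal (i - j), f p.1 p.2 else 0 := by
  rw [Fin.sum_univ_eq_sum_range (fun r => if j ≤ r ∧ r ≤ i then f (i - r) (r - j) else 0)]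
  split_ifs with hji
  · have hIco : (range (m + 1)).filter (fun r => j ≤ r ∧ r ≤ i) = Ico j (i + 1) := by
      ext r; simp only [mem_filter, mem_range, mem_Ico]; omega
    rw [← sum_filter, hIco, sum_Ico_eq_sum_range, ← Nat.sum_antidiagonal_swap]
    simp only [Prod.fst_swap, Prod.snd_swap]
    rw [Nat.sum_antidiagonal_eq_sum_range_succ (fun a b => f b a), Nat.succ_eq_add_one,
      show i + 1 - j = i - j + 1 by omega]
    refine sum_congr rfl fun l hl => ?_
    rw [mem_range] at hl
    congr 1 <;> omega
  · exact sum_eq_zero fun r _ => if_neg (by omega)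

section toeplitz

variable {R : Type*} [CommRing R] {n : ℕ} (m : ℕ)

lemma toeplitz_apply (A : ℕ → Matrix (Fin n) (Fin n) R) (i j : Fin (m + 1)) (a b : Fin n) :
    toeplitz m A (i, a) (j, b) = if (j : ℕ) ≤ i then A (i - j) a b else 0 :=
  rfl

lemma toeplitz_add (A B : ℕ → Matrix (Fin n) (Fin n) R) :
    toeplitz m (A + B) = toeplitz m A + toeplitz m B := by
  ext ⟨i, a⟩ ⟨j, b⟩
  simp only [Matrix.add_apply, toeplitz_apply, Pi.add_apply]
  split_ifs <;> simp

lemma toeplitz_sub (A B : ℕ → Matrix (Fin n) (Fin n) R) :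
    toeplitz m (A - B) = toeplitz m A - toeplitz m B := by
  ext ⟨i, a⟩ ⟨j, b⟩
  simp only [Matrix.sub_apply, toeplitz_apply, Pi.sub_apply]
  split_ifs <;> simp

lemma toeplitz_map (A : ℕ → Matrix (Fin n) (Fin n) R) {D : R → R} (hD : D 0 = 0) :
    (toeplitz m A).map D = toeplitz m fun k => (A k).map D := by
  ext ⟨i, a⟩ ⟨j, b⟩
  simp only [Matrix.map_apply, toeplitz_apply]
  split_ifs <;> simp [hD]

lemma toeplitz_mul_toeplitz (X Y : ℕ → Matrix (Fin n) (Fin n) R) :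
    toeplitz m X * toeplitz m Y = toeplitz m fun k => ∑ p ∈ antidiagonal k, X p.1 * Y p.2 := by
  ext ⟨i, a⟩ ⟨j, b⟩
  have hblock : ∀ r : Fin (m + 1), ∑ c, toeplitz m X (i, a) (r, c) * toeplitz m Y (r, c) (j, b) =
      if (j : ℕ) ≤ r ∧ (r : ℕ) ≤ i then (X (i - r) * Y (r - j)) a b else 0 := by
    intro r
    simp only [toeplitz_apply, Matrix.mul_apply]
    by_cases hri : (r : ℕ) ≤ i <;> by_cases hjr : (j : ℕ) ≤ r <;> simp [hri, hjr]
  rw [Matrix.mul_apply, Fintype.sum_prod_type, sum_congr rfl fun r _ => hblock r,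
    Fin.sum_ite_le_le_eq_sum_antidiagonal (Nat.lt_succ_iff.mp i.2) _ fun k l => (X k * Y l) a b,
    toeplitz_apply]
  simp only [Matrix.sum_apply]

lemma toeplitz_commutator (X Y : ℕ → Matrix (Fin n) (Fin n) R) :
    toeplitz m X * toeplitz m Y - toeplitz m Y * toeplitz m X =
      toeplitz m fun k => ∑ p ∈ antidiagonal k, (X p.1 * Y p.2 - Y p.2 * X p.1) := by
  rw [toeplitz_mul_toeplitz, toeplitz_mul_toeplitz, ← toeplitz_sub]
  congr 1
  funext k
  rw [Pi.sub_apply, sum_sub_distrib, ← Nat.sum_antidiagonal_swap (f := fun p => Y p.1 * X p.2)]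
  rfl

lemma toeplitz_eq_zero_iff (C : ℕ → Matrix (Fin n) (Fin n) R) :
    toeplitz m C = 0 ↔ ∀ k ≤ m, C k = 0 := by
  constructor
  · intro h k hk
    ext a b
    simpa [toeplitz_apply] using congrFun (congrFun h (⟨k, by omega⟩, a)) (0, b)
  · intro h
    ext ⟨i, a⟩ ⟨j, b⟩
    rw [toeplitz_apply, h _ (by omega)]
    simp

end toeplitz

theorem truncated_family_iff_toeplitz_zcr_general {R : Type*} [CommRing R] {n : ℕ}
    (Dx Dy : R → R) (hDx : IsDeriv Dx) (hDy : IsDeriv Dy)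
    (m : ℕ) (A B : ℕ → Matrix (Fin n) (Fin n) R) :
    (∀ k ≤ m, (A k).map Dy - (B k).map Dx +
        ∑ ij ∈ Finset.HasAntidiagonal.antidiagonal k, (A ij.1 * B ij.2 - B ij.2 * A ij.1) = 0) ↔
    ((toeplitz m A).map Dy - (toeplitz m B).map Dx +
        (toeplitz m A * toeplitz m B - toeplitz m B * toeplitz m A) = 0) := by
  rw [toeplitz_map m A hDy.map_zero, toeplitz_map m B hDx.map_zero, toeplitz_commutator,
    ← toeplitz_sub, ← toeplitz_add, toeplitz_eq_zero_iff]
  rfl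

/-- The equations `D_y A_k - D_x B_k + Σ_{i+j=k} [A_i, B_j] = 0` hold for all `k ≤ m`
if and only if the block lower-triangular Toeplitz matrices `A⁽ᵐ⁾, B⁽ᵐ⁾` constitute a
zero-curvature representation. -/
theorem truncated_family_iff_toeplitz_zcr {R : Type*} [CommRing R] {n : ℕ}
    (Dx Dy : R → R) (hDx : IsDeriv Dx) (hDy : IsDeriv Dy)
    (hcomm : ∀ a, Dx (Dy a) = Dy (Dx a))
    (m : ℕ) (A B : ℕ → Matrix (Fin n) (Fin n) R) :
    (∀ k ≤ m, (A k).map Dy - (B k).map Dx +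
        ∑ ij ∈ Finset.HasAntidiagonal.antidiagonal k, (A ij.1 * B ij.2 - B ij.2 * A ij.1) = 0) ↔
    ((toeplitz m A).map Dy - (toeplitz m B).map Dx +
        (toeplitz m A * toeplitz m B - toeplitz m B * toeplitz m A) = 0) :=
  truncated_family_iff_toeplitz_zcr_general Dx Dy hDx hDy m A B
end

section
/- Let f, p, q, r : ℝ² → ℝ be smooth functions of (x,t). Define the 2×2 matrix-valued functions A₀ = [[0, q],[-p, 0]] and B₀ = [[r, (fq)_x],[(fp)_x, -r]], where (fq)_x, (fp)_x denote the partial x-derivatives of the products. Then at every point, ∂_t A₀ - ∂_x B₀ + A₀·B₀ - B₀·A₀ = E¹·C₁ + E²·C₂ + E³·C₃, where E¹ = q_t - (fq)_{xx} - 2qr, E² = p_t + (fp)_{xx} + 2pr, E³ = r_x - f·(pq)_x - 2f_x·pq, and C₁ = [[0,1],[0,0]], C₂ = [[0,0],[-1,0]], C₃ = [[-1,0],[0,1]]. In particular, whenever p, q, r satisfy the inhomogeneous nonlinear Schrödinger system q_t = (fq)_{xx} + 2qr, p_t = -(fp)_{xx} - 2pr, r_x = f(pq)_x + 2f_x pq,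 the pair (A₀,B₀) is a zero-curvature representation: ∂_t A₀ - ∂_x B₀ + A₀·B₀ - B₀·A₀ = 0. -/
/-- Partial derivative with respect to the first coordinate `x`. -/
noncomputable def px (f : ℝ × ℝ → ℝ) : ℝ × ℝ → ℝ :=
  fun z => fderiv ℝ f z (1, 0)

/-- Partial derivative with respect to the second coordinate `t`. -/
noncomputable def pt (f : ℝ × ℝ → ℝ) : ℝ × ℝ → ℝ :=
  fun z => fderiv ℝ f z (0, 1)

/-- Entrywise partial `x`-derivative of a matrix-valued function. -/
noncomputable def Mpx (A : ℝ × ℝ → Matrix (Fin 2) (Fin 2) ℝ) :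
    ℝ × ℝ → Matrix (Fin 2) (Fin 2) ℝ :=
  fun z => Matrix.of fun i j => px (fun w => A w i j) z

/-- Entrywise partial `t`-derivative of a matrix-valued function. -/
noncomputable def Mpt (A : ℝ × ℝ → Matrix (Fin 2) (Fin 2) ℝ) :
    ℝ × ℝ → Matrix (Fin 2) (Fin 2) ℝ :=
  fun z => Matrix.of fun i j => pt (fun w => A w i j) z

lemma px_mul' (f g : ℝ × ℝ → ℝ) (hf : ContDiff ℝ (⊤ : ℕ∞) f) (hg : ContDiff ℝ (⊤ : ℕ∞) g) (z : ℝ × ℝ) :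
    px (fun w => f w * g w) z = px f z * g z + f z * px g z := by
  simp [px, fderiv_fun_mul (hf.differentiable (by simp) z) (hg.differentiable (by simp) z)]
  ring

lemma pt_neg' (f : ℝ × ℝ → ℝ) (z : ℝ × ℝ) : pt (fun w => -f w) z = -pt f z := by
  simp [pt]

lemma pt_zero' (z : ℝ × ℝ) : pt (fun _ : ℝ × ℝ => (0:ℝ)) z = 0 := by
  simp [pt]

lemma px_neg' (f : ℝ × ℝ → ℝ) (z : ℝ × ℝ) : px (fun w => -f w) z = -px f z := by
  simp [px]

/-- For the matrices `A₀, B₀` associated with the inhomogeneous nonlinear Schrödinger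
system, the curvature equals `E¹·C₁ + E²·C₂ + E³·C₃` where `E¹, E², E³` are the three
equations of the system and `C₁, C₂, C₃` the characteristic elements; in particular,
on solutions of the system, `(A₀, B₀)` is a zero-curvature representation. -/
theorem nhnls_zcr (f p q r : ℝ × ℝ → ℝ)
    (hf : ContDiff ℝ (⊤ : ℕ∞) f) (hp : ContDiff ℝ (⊤ : ℕ∞) p) (hq : ContDiff ℝ (⊤ : ℕ∞) q) (hr : ContDiff ℝ (⊤ : ℕ∞) r)
    (A₀ B₀ : ℝ × ℝ → Matrix (Fin 2) (Fin 2) ℝ)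
    (hA : A₀ = fun z => !![0, q z; -p z, 0])
    (hB : B₀ = fun z => !![r z, px (fun w => f w * q w) z;
                           px (fun w => f w * p w) z, -r z]) :
    (∀ z, Mpt A₀ z - Mpx B₀ z + (A₀ z * B₀ z - B₀ z * A₀ z)
        = (pt q z - px (px (fun w => f w * q w)) z - 2 * q z * r z) • !![(0 : ℝ), 1; 0, 0]
        + (pt p z + px (px (fun w => f w * p w)) z + 2 * p z * r z) • !![(0 : ℝ), 0; -1, 0]
        + (px r z - f z * px (fun w => p w * q w) z - 2 * px f z * (p z * q z))
            • !![(-1 : ℝ), 0; 0, 1])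
    ∧ ((∀ z, pt q z = px (px (fun w => f w * q w)) z + 2 * q z * r z) →
       (∀ z, pt p z = -(px (px (fun w => f w * p w)) z) - 2 * p z * r z) →
       (∀ z, px r z = f z * px (fun w => p w * q w) z + 2 * px f z * (p z * q z)) →
        ∀ z, Mpt A₀ z - Mpx B₀ z + (A₀ z * B₀ z - B₀ z * A₀ z) = 0) := by
  subst hA hB
  have main : ∀ z, Mpt (fun z => !![0, q z; -p z, 0]) z
      - Mpx (fun z => !![r z, px (fun w => f w * q w) z; px (fun w => f w * p w) z, -r z]) z
      + ((!![0, q z; -p z, 0] : Matrix (Fin 2) (Fin 2) ℝ)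
           * !![r z, px (fun w => f w * q w) z; px (fun w => f w * p w) z, -r z]
         - !![r z, px (fun w => f w * q w) z; px (fun w => f w * p w) z, -r z]
           * !![0, q z; -p z, 0])
        = (pt q z - px (px (fun w => f w * q w)) z - 2 * q z * r z) • !![(0 : ℝ), 1; 0, 0]
        + (pt p z + px (px (fun w => f w * p w)) z + 2 * p z * r z) • !![(0 : ℝ), 0; -1, 0]
        + (px r z - f z * px (fun w => p w * q w) z - 2 * px f z * (p z * q z))
            • !![(-1 : ℝ), 0; 0, 1] := by
    intro z
    ext i j
    fin_cases i <;> fin_cases j <;>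
      simp [Mpt, Mpx, Matrix.mul_apply, Fin.sum_univ_two, pt_neg', pt_zero', px_neg'] <;>
      (try ring)
    all_goals (rw [px_mul' f q hf hq z, px_mul' f p hf hp z, px_mul' p q hp hq z]; ring)
  refine ⟨main, fun h1 h2 h3 z => ?_⟩
  rw [main z, h1 z, h2 z, h3 z]
  ring_nf
  simp
end
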